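/- For every t > 0 and every x in [-1/2, 1/2), the one-dimensional periodic heat kernel satisfies φ_t(x) ≤ 2 φ_t(0) e^{-x²/(4t)}, where φ_t(x) = (4πt)^{-1/2} Σ_{k∈ℤ} exp(-(x+k)²/(4t)). -/

import Mathlib

/-!
For `0 ≤ x ≤ 1/2` and every `k ∈ ℤ`, `(x + k)²` dominates `x² + k²` (if `k ≥ 0`) or
`x² + (k + 1)²` (if `k < 0`). Hence each Gaussian term `e^{-(x+k)²/4t}` is at most `e^{-x²/4t}`
times `e^{-k²/4t} + e^{-(k+1)²/4t}`, and summing over `k` gives twice the sum at `x = 0`.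
Negative `x` reduce to positive ones since the sum over `k ∈ ℤ` is even in `x`.
-/

open Real

/-- The one-dimensional periodic heat kernel on `𝕋 = ℝ/ℤ`. -/
noncomputable def heatKernel1 (t x : ℝ) : ℝ :=
  (4 * π * t) ^ (-(1 / 2 : ℝ)) * ∑' k : ℤ, Real.exp (-(x + k) ^ 2 / (4 * t))

noncomputable def periodizedGaussian (t x : ℝ) : ℝ :=
  ∑' k : ℤ, exp (-(x + k) ^ 2 / (4 * t))

lemma summable_exp_neg_add_sq_div {t : ℝ} (ht : 0 < t) (x : ℝ) :
    Summable fun k : ℤ ↦ exp (-(x + k) ^ 2 / (4 * t)) := by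
  refine (HurwitzKernelBounds.summable_f_int 0 x (by positivity : 0 < 1 / (4 * π * t))).congr
    fun k ↦ ?_
  simp only [HurwitzKernelBounds.f_int, pow_zero, one_mul]
  congr 1
  field_simp
  ring

lemma periodizedGaussian_neg (t x : ℝ) : periodizedGaussian t (-x) = periodizedGaussian t x := by
  rw [periodizedGaussian, ← (Equiv.neg ℤ).tsum_eq]
  refine tsum_congr fun k ↦ ?_
  simp only [Equiv.neg_apply, Int.cast_neg]
  ring_nf

lemma sq_add_sq_le_sq_add_or {x : ℝ} (hx₀ : 0 ≤ x) (hx₁ : x ≤ 1 / 2) (k : ℤ) :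
    x ^ 2 + k ^ 2 ≤ (x + k) ^ 2 ∨ x ^ 2 + (k + 1) ^ 2 ≤ (x + k) ^ 2 := by
  rcases le_or_gt 0 k with hk | hk
  · left
    nlinarith [mul_nonneg hx₀ (by exact_mod_cast hk : (0 : ℝ) ≤ k)]
  · right
    have hk' : (k : ℝ) ≤ -1 := by exact_mod_cast Int.le_sub_one_of_lt hk
    nlinarith

lemma exp_neg_add_sq_div_le {t x : ℝ} (ht : 0 ≤ t) (hx₀ : 0 ≤ x) (hx₁ : x ≤ 1 / 2)
    (k : ℤ) :
    exp (-(x + k) ^ 2 / (4 * t)) ≤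
      exp (-x ^ 2 / (4 * t)) *
        (exp (-(k : ℝ) ^ 2 / (4 * t)) + exp (-((k : ℝ) + 1) ^ 2 / (4 * t))) := by
  have h4t : 0 ≤ 4 * t := by positivity
  have key (m : ℝ) (hm : x ^ 2 + m ^ 2 ≤ (x + k) ^ 2) :
      exp (-(x + k) ^ 2 / (4 * t)) ≤ exp (-x ^ 2 / (4 * t)) * exp (-m ^ 2 / (4 * t)) := by
    rw [← exp_add, exp_le_exp, ← add_div]
    exact div_le_div_of_nonneg_right (by linarith) h4t
  rw [mul_add]
  rcases sq_add_sq_le_sq_add_or hx₀ hx₁ k with h | h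
  · exact (key k h).trans (le_add_of_nonneg_right (by positivity))
  · exact (key (k + 1) h).trans (le_add_of_nonneg_left (by positivity))

lemma periodizedGaussian_le {t x : ℝ} (ht : 0 < t) (hx₀ : 0 ≤ x) (hx₁ : x ≤ 1 / 2) :
    periodizedGaussian t x ≤ 2 * periodizedGaussian t 0 * exp (-x ^ 2 / (4 * t)) := by
  set g : ℤ → ℝ := fun k ↦ exp (-(k : ℝ) ^ 2 / (4 * t))
  have hg : Summable g := by simpa using summable_exp_neg_add_sq_div ht 0
  have hg_shift : Summable fun k ↦ g (k + 1) := hg.comp_injective (add_left_injective 1)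
  have hS : periodizedGaussian t 0 = ∑' k, g k := by simp [periodizedGaussian, g]
  calc periodizedGaussian t x
      ≤ ∑' k, exp (-x ^ 2 / (4 * t)) * (g k + g (k + 1)) :=
        (summable_exp_neg_add_sq_div ht x).tsum_le_tsum
          (fun k ↦ by simpa [g] using exp_neg_add_sq_div_le ht.le hx₀ hx₁ k)
          ((hg.add hg_shift).mul_left _)
    _ = exp (-x ^ 2 / (4 * t)) * (∑' k, g k + ∑' k, g (k + 1)) := by
        rw [tsum_mul_left, hg.tsum_add hg_shift]
    _ = 2 * periodizedGaussian t 0 * exp (-x ^ 2 / (4 * t)) := by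
        rw [show ∑' k, g (k + 1) = ∑' k, g k from (Equiv.addRight 1).tsum_eq g, hS]
        ring

theorem heatKernel1_upper_bound (t : ℝ) (ht : 0 < t) (x : ℝ)
    (hx : x ∈ Set.Ico (-(1 / 2 : ℝ)) (1 / 2)) :
    heatKernel1 t x ≤ 2 * heatKernel1 t 0 * Real.exp (-x ^ 2 / (4 * t)) := by
  have hsum : periodizedGaussian t x ≤ 2 * periodizedGaussian t 0 * exp (-x ^ 2 / (4 * t)) := by
    rcases le_or_gt 0 x with hx₀ | hx₀
    · exact periodizedGaussian_le ht hx₀ hx.2.le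
    · simpa [periodizedGaussian_neg] using periodizedGaussian_le ht (neg_nonneg.mpr hx₀.le)
        (by linarith [hx.1])
  have hc : 0 ≤ (4 * π * t) ^ (-(1 / 2 : ℝ)) := by positivity
  calc heatKernel1 t x = (4 * π * t) ^ (-(1 / 2 : ℝ)) * periodizedGaussian t x := rfl
    _ ≤ (4 * π * t) ^ (-(1 / 2 : ℝ)) * (2 * periodizedGaussian t 0 * exp (-x ^ 2 / (4 * t))) :=
        mul_le_mul_of_nonneg_left hsum hc
    _ = 2 * heatKernel1 t 0 * exp (-x ^ 2 / (4 * t)) := by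
        rw [heatKernel1, periodizedGaussian]
        ring
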